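/- arXiv:0804.1275 — 2 statements merged into one kernel-verified Lean document; each statement's English description precedes it below -/
import Mathlib

section
/- Let f satisfy assumption (A) and write f(ρ) = ρ^n 𝑓̃(ρ) with 𝑓̃ smooth and positive on [0,∞). Define h(a) = a (𝑓̃(a²))^{1/(2n)} for a ∈ ℝ. Then h is smooth, h'(a) > 0 for all a ∈ ℝ, h(a)^{2n} = f(a²) for all a, and h is a smooth diffeomorphism from ℝ onto its image. -/
/-- With `f` satisfying (A), `f(ρ) = ρ^n 𝑓̃(ρ)` with `𝑓̃` smooth and positive
on `[0,∞)`, the function `h(a) = a (𝑓̃(a²))^{1/(2n)}` is smooth, has `h' > 0` everywhere,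
satisfies `h(a)^{2n} = f(a²)`, and is a smooth diffeomorphism from `ℝ` onto its image. -/
theorem stmt3 (f ftil : ℝ → ℝ) (n : ℕ)
    (hf : ContDiff ℝ (⊤ : ℕ∞) f) (hf0 : f 0 = 0)
    (hf' : ∀ ρ : ℝ, 0 < ρ → 0 < deriv f ρ)
    (hn : 1 ≤ n)
    (hftil : ContDiff ℝ (⊤ : ℕ∞) ftil)
    (hftilpos : ∀ ρ : ℝ, 0 ≤ ρ → 0 < ftil ρ)
    (hfact : ∀ ρ : ℝ, 0 ≤ ρ → f ρ = ρ ^ n * ftil ρ)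
    (h : ℝ → ℝ)
    (hdef : ∀ a : ℝ, h a = a * (ftil (a ^ 2)) ^ ((1 : ℝ) / (2 * (n : ℝ)))) :
    ContDiff ℝ (⊤ : ℕ∞) h ∧ (∀ a : ℝ, 0 < deriv h a) ∧
    (∀ a : ℝ, (h a) ^ (2 * n) = f (a ^ 2)) ∧
    StrictMono h ∧
    ∃ g : ℝ → ℝ, ContDiffOn ℝ (⊤ : ℕ∞) g (Set.range h) ∧ ∀ a : ℝ, g (h a) = a := by
  classical
  set c : ℝ := (1 : ℝ) / (2 * (n : ℝ)) with hc
  have hnpos : (0 : ℝ) < (n : ℝ) := by exact_mod_cast Nat.pos_of_ne_zero (by omega)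
  have hgpos : ∀ a : ℝ, 0 < ftil (a ^ 2) := fun a => hftilpos _ (sq_nonneg a)
  set G : ℝ → ℝ := fun a => (ftil (a ^ 2)) ^ c with hG
  have hGpos : ∀ a : ℝ, 0 < G a := fun a => Real.rpow_pos_of_pos (hgpos a) c
  have hGsmooth : ContDiff ℝ (⊤ : ℕ∞) G := by
    rw [contDiff_iff_contDiffAt]
    intro a
    have h1 : ContDiffAt ℝ (⊤ : ℕ∞) (fun a : ℝ => ftil (a ^ 2)) a :=
      hftil.contDiffAt.comp a ((contDiff_id.pow 2).contDiffAt)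
    exact h1.rpow_const_of_ne (ne_of_gt (hgpos a))
  have hheq : h = fun a => a * G a := funext fun a => hdef a
  have hsmooth : ContDiff ℝ (⊤ : ℕ∞) h := by
    rw [hheq]; exact contDiff_id.mul hGsmooth
  have hdiff : Differentiable ℝ h := hsmooth.differentiable (by simp)
  -- the identity
  have hiden : ∀ a : ℝ, (h a) ^ (2 * n) = f (a ^ 2) := by
    intro a
    rw [hdef, mul_pow, hfact _ (sq_nonneg a)]
    have hGe : ((ftil (a ^ 2)) ^ c) ^ (2 * n) = ftil (a ^ 2) := by
      rw [← Real.rpow_natCast ((ftil (a ^ 2)) ^ c) (2 * n),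
        ← Real.rpow_mul (le_of_lt (hgpos a))]
      have : c * ((2 * n : ℕ) : ℝ) = 1 := by
        rw [hc]; push_cast; field_simp
      rw [this, Real.rpow_one]
    rw [hGe, ← pow_mul, mul_comm 2 n, pow_mul]
  -- key derivative identity
  have hkey : ∀ a : ℝ, ((2 * n : ℕ) : ℝ) * (h a) ^ (2 * n - 1) * deriv h a
      = deriv f (a ^ 2) * (2 * a) := by
    intro a
    have H1 : HasDerivAt (fun a => (h a) ^ (2 * n))
        (((2 * n : ℕ) : ℝ) * (h a) ^ (2 * n - 1) * deriv h a) a :=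
      (hdiff a).hasDerivAt.pow (2 * n)
    have hsq : HasDerivAt (fun a : ℝ => a ^ 2) (2 * a) a := by
      simpa using hasDerivAt_pow 2 a
    have H2 : HasDerivAt (fun a => f (a ^ 2)) (deriv f (a ^ 2) * (2 * a)) a :=
      ((hf.differentiable (by simp) (a ^ 2)).hasDerivAt).comp a hsq
    have heqf : (fun a => (h a) ^ (2 * n)) = fun a => f (a ^ 2) := funext hiden
    rw [heqf] at H1
    exact H1.unique H2
  have h2n1odd : Odd (2 * n - 1) := ⟨n - 1, by omega⟩
  have hderivpos : ∀ a : ℝ, 0 < deriv h a := by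
    intro a
    rcases lt_trichotomy a 0 with ha | ha | ha
    · have hha : h a < 0 := by
        rw [hdef]; exact mul_neg_of_neg_of_pos ha (Real.rpow_pos_of_pos (hgpos a) c)
      have hp : (h a) ^ (2 * n - 1) < 0 := h2n1odd.pow_neg hha
      have hfpos : 0 < deriv f (a ^ 2) := hf' _ (by nlinarith)
      have hk := hkey a
      push_cast at hk
      have hden : (2 * (n:ℝ)) * (h a) ^ (2 * n - 1) < 0 :=
        mul_neg_of_pos_of_neg (by positivity) hp
      have hD : deriv h a = (deriv f (a ^ 2) * (2 * a)) / ((2 * (n:ℝ)) * (h a) ^ (2 * n - 1)) :=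
        (eq_div_iff hden.ne).2 (by linear_combination hk)
      rw [hD]
      exact div_pos_of_neg_of_neg (mul_neg_of_pos_of_neg hfpos (by linarith)) hden
    · subst ha
      have hd : HasDerivAt h (1 * G 0 + 0 * deriv G 0) 0 := by
        rw [hheq]
        exact (hasDerivAt_id 0).mul ((hGsmooth.differentiable (by simp) 0).hasDerivAt)
      have := hd.deriv
      rw [this]
      simpa using hGpos 0
    · have hha : 0 < h a := by
        rw [hdef]; exact mul_pos ha (Real.rpow_pos_of_pos (hgpos a) c)
      have hp : 0 < (h a) ^ (2 * n - 1) := pow_pos hha _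
      have hfpos : 0 < deriv f (a ^ 2) := hf' _ (by positivity)
      have hk := hkey a
      push_cast at hk
      have hden : 0 < (2 * (n:ℝ)) * (h a) ^ (2 * n - 1) :=
        mul_pos (by positivity) hp
      have hD : deriv h a = (deriv f (a ^ 2) * (2 * a)) / ((2 * (n:ℝ)) * (h a) ^ (2 * n - 1)) :=
        (eq_div_iff hden.ne').2 (by linear_combination hk)
      rw [hD]
      exact div_pos (mul_pos hfpos (by linarith)) hden
  have hsm : StrictMono h := strictMono_of_deriv_pos hderivpos
  refine ⟨hsmooth, hderivpos, hiden, hsm, ?_⟩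
  refine ⟨Function.invFun h, ?_, fun a => Function.leftInverse_invFun hsm.injective a⟩
  rintro b ⟨a, rfl⟩
  have hca : ContDiffAt ℝ (⊤ : ℕ∞) h a := hsmooth.contDiffAt
  have hne : deriv h a ≠ 0 := ne_of_gt (hderivpos a)
  have hfd : HasFDerivAt h
      ((ContinuousLinearEquiv.unitsEquivAut ℝ (Units.mk0 (deriv h a) hne)) : ℝ →L[ℝ] ℝ) a :=
    (hdiff a).hasDerivAt.hasFDerivAt_equiv hne
  have hn' : ((⊤ : ℕ∞) : WithTop ℕ∞) ≠ 0 := by simp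
  have hli : ContDiffAt ℝ (⊤ : ℕ∞) (hca.localInverse hfd hn') (h a) :=
    hca.to_localInverse hfd hn'
  have hev : ∀ᶠ y in nhds (h a), h (hca.localInverse hfd hn' y) = y :=
    (hca.hasStrictFDerivAt' hfd hn').eventually_right_inverse
  have hcongr : Function.invFun h =ᶠ[nhds (h a)] hca.localInverse hfd hn' := by
    filter_upwards [hev] with y hy
    have : Function.invFun h y = hca.localInverse hfd hn' y := by
      apply hsm.injective
      rw [Function.invFun_eq ⟨_, hy⟩, hy]
    exact this
  exact (hli.congr_of_eventuallyEq hcongr).contDiffWithinAt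
end

section
/- With h as above (h(a) = a(𝑓̃(a²))^{1/(2n)}, h' > 0 on ℝ), there exists a smooth positive function c on h(ℝ) such that (1/2) a h'(a) = h(a) c(h(a)) for all a ∈ ℝ. -/
/-- With `h(a) = a (𝑓̃(a²))^{1/(2n)}` smooth with `h' > 0` on `ℝ`, there is a
smooth positive function `c` on `h(ℝ)` with `(1/2) a h'(a) = h(a) c(h(a))` for all `a`. -/
theorem stmt4 (ftil : ℝ → ℝ) (n : ℕ)
    (hftil : ContDiff ℝ (⊤ : ℕ∞) ftil)
    (hftilpos : ∀ ρ : ℝ, 0 ≤ ρ → 0 < ftil ρ)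
    (hn : 1 ≤ n)
    (h : ℝ → ℝ)
    (hdef : ∀ a : ℝ, h a = a * (ftil (a ^ 2)) ^ ((1 : ℝ) / (2 * (n : ℝ))))
    (hsmooth : ContDiff ℝ (⊤ : ℕ∞) h)
    (hderiv : ∀ a : ℝ, 0 < deriv h a) :
    ∃ c : ℝ → ℝ, ContDiffOn ℝ (⊤ : ℕ∞) c (Set.range h) ∧
      (∀ x ∈ Set.range h, 0 < c x) ∧
      ∀ a : ℝ, (1 / 2 : ℝ) * a * deriv h a = h a * c (h a) := by
  classical
  have hmono : StrictMono h := strictMono_of_deriv_pos hderiv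
  have hinj : Function.Injective h := hmono.injective
  have hdiff : Differentiable ℝ h := hsmooth.differentiable (by simp)
  set g : ℝ → ℝ := fun a => (ftil (a ^ 2)) ^ ((1 : ℝ) / (2 * (n : ℝ))) with hgdef
  have hgpos : ∀ a, 0 < g a := fun a =>
    Real.rpow_pos_of_pos (hftilpos _ (sq_nonneg a)) _
  have hgsmooth : ContDiff ℝ (⊤ : ℕ∞) g := by
    rw [contDiff_iff_contDiffAt]
    intro a
    have hinner : ContDiffAt ℝ (⊤ : ℕ∞) (fun a : ℝ => ftil (a ^ 2)) a :=
      (hftil.comp (contDiff_id.pow 2)).contDiffAt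
    exact (Real.contDiffAt_rpow_const_of_ne
      (hftilpos _ (sq_nonneg a)).ne').comp a hinner
  have hdsmooth : ContDiff ℝ (⊤ : ℕ∞) (deriv h) := by
    exact (contDiff_infty_iff_deriv.mp hsmooth).2
  set q : ℝ → ℝ := fun a => (1 / 2 : ℝ) * deriv h a / g a with hqdef
  have hq : ContDiff ℝ (⊤ : ℕ∞) q :=
    (contDiff_const.mul hdsmooth).div hgsmooth fun a => (hgpos a).ne'
  have hqpos : ∀ a, 0 < q a := fun a =>
    div_pos (by have := hderiv a; positivity) (hgpos a)
  have key : ∀ a : ℝ, Function.invFun h (h a) = a := fun a =>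
    Function.leftInverse_invFun hinj a
  have hc : ∀ a : ℝ, ContDiffAt ℝ (⊤ : ℕ∞) (q ∘ Function.invFun h) (h a) := by
    intro a
    have hda : HasDerivAt h (deriv h a) a := (hdiff a).hasDerivAt
    have hfd := hda.hasFDerivAt_equiv (hderiv a).ne'
    have hca : ContDiffAt ℝ (⊤ : ℕ∞) h a := hsmooth.contDiffAt
    have hone : ((⊤ : ℕ∞) : WithTop ℕ∞) ≠ 0 := by simp
    have hinvC : ContDiffAt ℝ (⊤ : ℕ∞) (hca.localInverse hfd hone) (h a) :=
      hca.to_localInverse hfd hone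
    have hev : ∀ᶠ y in nhds (h a), h (hca.localInverse hfd hone y) = y :=
      (hca.hasStrictFDerivAt' hfd hone).eventually_right_inverse
    have heq : (q ∘ Function.invFun h) =ᶠ[nhds (h a)]
        (q ∘ hca.localInverse hfd hone) := by
      filter_upwards [hev] with y hy
      simp only [Function.comp]
      congr 1
      apply hinj
      rw [hy, Function.invFun_eq ⟨_, hy⟩]
    exact ((hq.contDiffAt.comp _ hinvC)).congr_of_eventuallyEq heq
  refine ⟨q ∘ Function.invFun h, ?_, ?_, ?_⟩
  · rintro x ⟨a, rfl⟩
    exact (hc a).contDiffWithinAt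
  · rintro x ⟨a, rfl⟩
    simpa [Function.comp, key a] using hqpos a
  · intro a
    have hval : (q ∘ Function.invFun h) (h a) = q a := by
      simp [Function.comp, key a]
    rw [hval, hdef a]
    have hgne := (hgpos a).ne'
    show (1 / 2 : ℝ) * a * deriv h a = a * g a * ((1 / 2 : ℝ) * deriv h a / g a)
    field_simp
end
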